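/- (Reconstruction of the filter lattice.) Let D be a distributive lattice with ⊤ and ⊥. The assignments F ↦ L_F := {x ∈ Spec D | ∀ p ∈ F, p ∉ x} and L ↦ F_L := {p : D | ∀ x ∈ L, p ∉ x} define mutually inverse, inclusion-reversing bijections between the filters of D (Order.PFilter D) and the subsets of Spec D that are ultraproduct-closed and down-closed. In particular, L_F is ultraproduct-closed and down-closed for every filter F, F_L is a filter for every such L, F_{L_F} = F, and L_{F_L} = L. -/

import Mathlib

universe u v

/-- The set of prime ideals of a bounded distributive lattice `D`. -/
def Spec (D : Type u) [DistribLattice D] [BoundedOrder D] : Set (Order.Ideal D) :=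
  {x | x.IsPrime}

/-- `K` is ultraproduct-closed: whenever `f` is a family of ideals valued in
`K` and `J` is the ultraproduct of `f` along the ultrafilter `μ`
(characterised by `p ∈ J ↔ {s | p ∈ f s} ∈ μ`), then `J` belongs to `K`. -/
def UltraClosed (D : Type u) [DistribLattice D] [BoundedOrder D]
    (K : Set (Order.Ideal D)) : Prop :=
  ∀ (S : Type u) (f : S → Order.Ideal D) (μ : Ultrafilter S) (J : Order.Ideal D),
    (∀ s, f s ∈ K) → (∀ p : D, p ∈ J ↔ {s | p ∈ f s} ∈ μ) → J ∈ K

/-- `K` is up-closed in `Spec D`. -/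
def UpClosed (D : Type u) [DistribLattice D] [BoundedOrder D]
    (K : Set (Order.Ideal D)) : Prop :=
  ∀ x ∈ K, ∀ y ∈ Spec D, x ≤ y → y ∈ K

/-- `K` is down-closed in `Spec D`. -/
def DownClosed (D : Type u) [DistribLattice D] [BoundedOrder D]
    (K : Set (Order.Ideal D)) : Prop :=
  ∀ x ∈ K, ∀ y ∈ Spec D, y ≤ x → y ∈ K

/-- `L_F`: the set of prime ideals disjoint from the filter `F`. -/
def specL {D : Type u} [DistribLattice D] [BoundedOrder D]
    (F : Order.PFilter D) : Set (Order.Ideal D) :=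
  {x | x ∈ Spec D ∧ ∀ p ∈ F, p ∉ x}

/-- `F_L`: the set of elements of `D` lying in no member of `L`. -/
def filterOf {D : Type u} [DistribLattice D] [BoundedOrder D]
    (L : Set (Order.Ideal D)) : Set D :=
  {p | ∀ x ∈ L, p ∉ x}

/-!
A prime ideal `x` lies in `L_{F_L}` exactly when each of its elements lies in some member of `L`.
Ultraproduct-closedness upgrades such pointwise information to a single member of `L` along any
directed index set: first some `J ∈ L` contains the whole ideal `{d | d ⊓ b ≤ a}` (for `a ∈ x`,
`b ∉ x`), and the prime ideal theorem inside `J` gives `z ≤ J`, hence `z ∈ L`, with `a ∈ z` and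
`b ∉ z`; then `x` itself is the ultraproduct of these separating `z` along the pairs `(a, b)`
directed by `a ↑, b ↓`. The other identities follow from the prime ideal theorem.
-/

open Filter OrderDual

namespace Order

namespace Ideal

section Ultraproduct

variable {P : Type*} {S : Type*}

def ultraproduct [SemilatticeSup P] [OrderBot P] (f : S → Ideal P) (μ : Ultrafilter S) :
    Ideal P where
  carrier := {p | ∀ᶠ s in μ, p ∈ f s}
  lower' _ _ hqp hp := hp.mono fun s hs => (f s).lower hqp hs
  nonempty' := ⟨⊥, Eventually.of_forall fun s => (f s).bot_mem⟩
  directed' _ hp _ hq :=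
    ⟨_, (hp.and hq).mono fun _ hs => sup_mem hs.1 hs.2, le_sup_left, le_sup_right⟩

theorem mem_ultraproduct [SemilatticeSup P] [OrderBot P] {f : S → Ideal P} {μ : Ultrafilter S}
    {p : P} : p ∈ ultraproduct f μ ↔ ∀ᶠ s in μ, p ∈ f s :=
  Iff.rfl

theorem isPrime_ultraproduct [Lattice P] [BoundedOrder P] {f : S → Ideal P} {μ : Ultrafilter S}
    (hf : ∀ s, (f s).IsPrime) : (ultraproduct f μ).IsPrime := by
  have : (ultraproduct f μ).IsProper := isProper_of_notMem (p := ⊤) fun h =>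
    let ⟨s, hs⟩ := h.exists
    (hf s).toIsProper.top_notMem hs
  refine IsPrime.of_mem_or_mem fun {p q} hpq => ?_
  simp only [mem_ultraproduct, ← Ultrafilter.eventually_or]
  exact hpq.mono fun s hs => (hf s).mem_or_mem hs

end Ultraproduct

variable {D : Type*} [DistribLattice D]

def colon (a b : D) : Ideal D where
  carrier := {d | d ⊓ b ≤ a}
  lower' _ _ hqp hp := (inf_le_inf_right _ hqp).trans hp
  nonempty' := ⟨a, inf_le_left⟩
  directed' p hp q hq := ⟨p ⊔ q, by
    change (p ⊔ q) ⊓ b ≤ a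
    exact inf_sup_right p q b ▸ sup_le hp hq, le_sup_left, le_sup_right⟩

theorem mem_colon {a b d : D} : d ∈ colon a b ↔ d ⊓ b ≤ a :=
  Iff.rfl

end Ideal

namespace PFilter

variable {P : Type*} [SemilatticeInf P]

def adjoin (F : PFilter P) (b : P) : PFilter P :=
  IsPFilter.toPFilter (F := {c | ∃ d ∈ F, d ⊓ b ≤ c}) <| by
    refine .of_def (F.nonempty.elim fun d hd => ⟨d ⊓ b, d, hd, le_rfl⟩) ?_
      fun hcc' ⟨d, hd, hdc⟩ => ⟨d, hd, hdc.trans hcc'⟩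
    rintro c₁ ⟨d₁, hd₁, h₁⟩ c₂ ⟨d₂, hd₂, h₂⟩
    refine ⟨c₁ ⊓ c₂, ⟨d₁ ⊓ d₂, inf_mem hd₁ hd₂, le_inf ?_ ?_⟩, inf_le_left, inf_le_right⟩
    exacts [(inf_le_inf_right b inf_le_left).trans h₁, (inf_le_inf_right b inf_le_right).trans h₂]

theorem mem_adjoin {F : PFilter P} {b c : P} : c ∈ F.adjoin b ↔ ∃ d ∈ F, d ⊓ b ≤ c :=
  Iff.rfl

end PFilter

namespace Ideal

variable {D : Type*} [DistribLattice D] [BoundedOrder D]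

theorem IsPrime.exists_isPrime_le {J : Ideal D} (hJ : J.IsPrime) {a b : D}
    (h : colon a b ≤ J) : ∃ z : Ideal D, z.IsPrime ∧ z ≤ J ∧ a ∈ z ∧ b ∉ z := by
  set G := hJ.compl_filter.toPFilter.adjoin b
  have hGa : Disjoint (G : Set D) (principal a : Set D) :=
    Set.disjoint_left.2 fun _ ⟨_, hdJ, hdc⟩ hca =>
      hdJ (h (mem_colon.2 (hdc.trans (mem_principal.1 hca))))
  obtain ⟨z, hz, haz, hGz⟩ := DistribLattice.prime_ideal_of_disjoint_filter_ideal hGa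
  refine ⟨z, hz, fun d hdz => ?_, haz mem_principal_self, fun hbz => ?_⟩
  · by_contra hdJ
    exact Set.disjoint_left.1 hGz (PFilter.mem_adjoin.2 ⟨d, hdJ, inf_le_left⟩) hdz
  · exact Set.disjoint_left.1 hGz
      (PFilter.mem_adjoin.2 ⟨⊤, hJ.toIsProper.top_notMem, inf_le_right⟩) hbz

end Ideal

end Order

open Order Order.Ideal

section Reconstruction

variable {D : Type u} [DistribLattice D] [BoundedOrder D]

theorem UltraClosed.exists_mem_of_neBot {L : Set (Ideal D)} (hL : UltraClosed D L)
    {S : Type u} {l : Filter S} [l.NeBot] {f : S → Ideal D} (hf : ∀ s, f s ∈ L) :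
    ∃ J ∈ L, ∀ p, ((∀ᶠ s in l, p ∈ f s) → p ∈ J) ∧ ((∀ᶠ s in l, p ∉ f s) → p ∉ J) :=
  ⟨ultraproduct f (.of l), hL _ _ _ _ hf fun _ => Iff.rfl, fun _ =>
    ⟨fun h => Ultrafilter.of_le l h,
      fun h => Ultrafilter.eventually_not.1 (Ultrafilter.of_le l h)⟩⟩

theorem UltraClosed.exists_ge_mem {L : Set (Ideal D)} (hL : UltraClosed D L) (T : Ideal D)
    (hT : ∀ t ∈ T, ∃ y ∈ L, t ∈ y) : ∃ J ∈ L, T ≤ J := by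
  choose y hyL hty using fun t : T => hT t t.2
  have : IsDirectedOrder T := T.directed.isDirectedOrder
  have : Nonempty T := T.nonempty.to_subtype
  obtain ⟨J, hJL, hJ⟩ := hL.exists_mem_of_neBot (l := atTop) hyL
  exact ⟨J, hJL, fun t ht => (hJ t).1 <|
    (eventually_ge_atTop ⟨t, ht⟩).mono fun s hs => (y s).lower hs (hty s)⟩

section Covered

variable {L : Set (Ideal D)} (hSpec : L ⊆ Spec D) (hU : UltraClosed D L) (hD : DownClosed D L)
  {x : Ideal D} (hx : x.IsPrime) (hcov : ∀ p ∈ x, ∃ y ∈ L, p ∈ y)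
include hSpec hU hD hx hcov

theorem exists_mem_mem_notMem_of_covered {a b : D} (ha : a ∈ x) (hb : b ∉ x) :
    ∃ z ∈ L, a ∈ z ∧ b ∉ z := by
  have hcolon : colon a b ≤ x := fun d hd =>
    (hx.mem_or_mem (x.lower (mem_colon.1 hd) ha)).resolve_right hb
  obtain ⟨J, hJL, hJ⟩ := hU.exists_ge_mem (colon a b) fun d hd => hcov d (hcolon hd)
  obtain ⟨z, hz, hzJ, haz, hbz⟩ := (hSpec hJL).exists_isPrime_le hJ
  exact ⟨z, hD J hJL z hz hzJ, haz, hbz⟩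

theorem mem_of_covered : x ∈ L := by
  let S : Set (D × Dᵒᵈ) := {q | q.1 ∈ x ∧ ofDual q.2 ∉ x}
  have hS : DirectedOn (· ≤ ·) S := fun q hq r hr =>
    ⟨q ⊔ r, ⟨sup_mem hq.1 hr.1, fun h => (hx.mem_or_mem h).elim hq.2 hr.2⟩, le_sup_left,
      le_sup_right⟩
  have : IsDirectedOrder S := hS.isDirectedOrder
  have : Nonempty S := ⟨⟨(⊥, toDual ⊤), x.bot_mem, hx.toIsProper.top_notMem⟩⟩
  choose z hzL haz hbz using fun q : S =>
    exists_mem_mem_notMem_of_covered hSpec hU hD hx hcov q.2.1 q.2.2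
  obtain ⟨J, hJL, hJ⟩ := hU.exists_mem_of_neBot (l := atTop) hzL
  suffices J = x from this ▸ hJL
  refine SetLike.ext fun p =>
    ⟨fun hpJ => by_contra fun hp => (hJ p).2 ?_ hpJ, fun hp => (hJ p).1 ?_⟩
  · exact (eventually_ge_atTop ⟨(⊥, toDual p), x.bot_mem, hp⟩).mono fun q hq hpq =>
      hbz q ((z q).lower hq.2 hpq)
  · exact (eventually_ge_atTop ⟨(p, toDual ⊤), hp, hx.toIsProper.top_notMem⟩).mono fun q hq =>
      (z q).lower hq.1 (haz q)

end Covered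

theorem ultraClosed_specL (F : PFilter D) : UltraClosed D (specL F) := by
  intro S f μ J hf hJ
  obtain rfl : J = ultraproduct f μ := SetLike.ext hJ
  refine ⟨isPrime_ultraproduct fun s => (hf s).1, fun p hpF hp => ?_⟩
  obtain ⟨s, hs⟩ := hp.exists
  exact (hf s).2 p hpF hs

theorem downClosed_specL (F : PFilter D) : DownClosed D (specL F) :=
  fun _ hx _ hy hyx => ⟨hy, fun p hpF hpy => hx.2 p hpF (hyx hpy)⟩

theorem isPFilter_filterOf {L : Set (Ideal D)} (hL : L ⊆ Spec D) : IsPFilter (filterOf L) :=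
  .of_def ⟨⊤, fun _ hx => (hL hx).toIsProper.top_notMem⟩
    (fun p hp q hq => ⟨p ⊓ q, fun x hx hpq => ((hL hx).mem_or_mem hpq).elim (hp x hx) (hq x hx),
      inf_le_left, inf_le_right⟩)
    fun hpq hp x hx hq => hp x hx (x.lower hpq hq)

theorem filterOf_anti : Antitone (filterOf : Set (Ideal D) → Set D) :=
  fun _ _ h _ hp x hx => hp x (h hx)

theorem filterOf_specL (F : PFilter D) : filterOf (specL F) = F := by
  refine Set.Subset.antisymm (fun p hp => by_contra fun hpF => ?_) fun p hpF x hx => hx.2 p hpF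
  have hFp : Disjoint (F : Set D) (principal p : Set D) :=
    Set.disjoint_left.2 fun _ hqF hqp => hpF (F.mem_of_le (mem_principal.1 hqp) hqF)
  obtain ⟨J, hJ, hpJ, hFJ⟩ := DistribLattice.prime_ideal_of_disjoint_filter_ideal hFp
  exact hp J ⟨hJ, fun _ hqF hqJ => Set.disjoint_left.1 hFJ hqF hqJ⟩ (hpJ mem_principal_self)

theorem specL_subset_specL_iff {F G : PFilter D} : specL G ⊆ specL F ↔ F ≤ G := by
  refine ⟨fun h => ?_, fun h _ hx => ⟨hx.1, fun p hpF => hx.2 p (h hpF)⟩⟩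
  have := filterOf_anti h
  rwa [filterOf_specL, filterOf_specL] at this

theorem specL_eq_of_coe_eq_filterOf {L : Set (Ideal D)} (hSpec : L ⊆ Spec D)
    (hU : UltraClosed D L) (hD : DownClosed D L) {F : PFilter D}
    (hF : (F : Set D) = filterOf L) : specL F = L := by
  ext x
  refine ⟨fun hx => mem_of_covered hSpec hU hD hx.1 fun p hp => ?_, fun hx =>
    ⟨hSpec hx, fun p hpF => (show p ∈ filterOf L from hF ▸ hpF) x hx⟩⟩
  by_contra! h
  exact hx.2 p (show p ∈ (F : Set D) from hF ▸ h) hp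

end Reconstruction

/-- Reconstruction of the filter lattice: `F ↦ L_F` and `L ↦ F_L` are mutually
inverse, inclusion-reversing bijections between filters of `D` and
ultraproduct-closed down-closed subsets of `Spec D`. -/
theorem filter_lattice_reconstruction {D : Type u} [DistribLattice D] [BoundedOrder D] :
    (∀ F : Order.PFilter D,
      specL F ⊆ Spec D ∧ UltraClosed D (specL F) ∧ DownClosed D (specL F)) ∧
    (∀ L : Set (Order.Ideal D), L ⊆ Spec D → UltraClosed D L → DownClosed D L →
      ∃ F : Order.PFilter D, (F : Set D) = filterOf L) ∧
    (∀ F : Order.PFilter D, filterOf (specL F) = (F : Set D)) ∧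
    (∀ L : Set (Order.Ideal D), L ⊆ Spec D → UltraClosed D L → DownClosed D L →
      ∀ F : Order.PFilter D, (F : Set D) = filterOf L → specL F = L) ∧
    (∀ F G : Order.PFilter D, F ≤ G ↔ specL G ⊆ specL F) :=
  ⟨fun F => ⟨fun _ hx => hx.1, ultraClosed_specL F, downClosed_specL F⟩,
    fun _ hL _ _ => ⟨(isPFilter_filterOf hL).toPFilter, rfl⟩,
    filterOf_specL,
    fun _ hL hU hD _ hF => specL_eq_of_coe_eq_filterOf hL hU hD hF,
    fun _ _ => specL_subset_specL_iff.symm⟩
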